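/- arXiv:2002.05757 — 2 statements merged into one kernel-verified Lean document; each statement's English description precedes it below -/
import Mathlib

section
/- With Ŵ = P⁻¹(K) as above, every L-generated subspace of V containing W contains Ŵ; hence Ŵ is the smallest L-generated subspace containing W (the L-closure of W). -/
/-!
Let `U ⊇ W` be spanned by `U ∩ L`. Then `L ∩ U` is a lattice of rank `dim U` in `U`, so the image
of `L` in `V ⧸ U` is a finitely generated group of rank `dim (V ⧸ U)` spanning `V ⧸ U`: a ℤ-basis
of it is an ℝ-basis, so the image is discrete, hence closed and totally disconnected. The
continuous projection `V ⧸ W → V ⧸ U` maps the closure of the image of `L` in `V ⧸ W` into the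
closure of its image in `V ⧸ U`, and so maps `K` into the identity component there, which is `{0}`.
Hence `Ŵ = P⁻¹(K) ⊆ U`.
-/

open Submodule Module Set

theorem connectedComponentIn_subset_singleton {X : Type*} [TopologicalSpace X] {s : Set X}
    [DiscreteTopology s] (x : X) : connectedComponentIn s x ⊆ {x} := by
  intro y hy
  have hx : x ∈ s := connectedComponentIn_nonempty_iff.1 ⟨y, hy⟩
  rwa [connectedComponentIn_eq_image hx, connectedComponent_eq_singleton, image_singleton] at hy

theorem Continuous.mapsTo_connectedComponentIn_of_mapsTo {X Y : Type*} [TopologicalSpace X]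
    [TopologicalSpace Y] {f : X → Y} (hf : Continuous f) {s : Set X} {t : Set Y}
    (hst : MapsTo f s t) (x : X) :
    MapsTo f (connectedComponentIn s x) (connectedComponentIn t (f x)) := by
  intro y hy
  have hx : x ∈ s := connectedComponentIn_nonempty_iff.1 ⟨y, hy⟩
  exact connectedComponentIn_mono _ hst.image_subset
    (hf.continuousOn.mapsTo_connectedComponentIn hx hy)

theorem Submodule.preimage_mkQ_connectedComponentIn_closure_mono {R M : Type*} [Ring R]
    [AddCommGroup M] [Module R M] [TopologicalSpace M] {W U : Submodule R M} (hWU : W ≤ U)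
    (S : Set M) :
    W.mkQ ⁻¹' connectedComponentIn (closure (W.mkQ '' S)) 0 ⊆
      U.mkQ ⁻¹' connectedComponentIn (closure (U.mkQ '' S)) 0 := by
  let π := W.liftQL U.mkQL (by rwa [toLinearMap_mkQL, ker_mkQ])
  have hπ : ∀ x, π (W.mkQ x) = U.mkQ x := fun _ => rfl
  have hmaps : MapsTo π (closure (W.mkQ '' S)) (closure (U.mkQ '' S)) := by
    refine fun _ hy => map_mem_closure π.continuous hy ?_
    rintro _ ⟨x, hx, rfl⟩
    exact ⟨x, hx, rfl⟩
  intro x hx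
  simpa only [mem_preimage, hπ, map_zero] using
    π.continuous.mapsTo_connectedComponentIn_of_mapsTo hmaps 0 hx

theorem Submodule.discreteTopology_of_span_eq_top_of_finrank_eq {E : Type*}
    [NormedAddCommGroup E] [NormedSpace ℝ E] (M : Submodule ℤ E) [Module.Finite ℤ M]
    (hspan : span ℝ (M : Set E) = ⊤) (hrank : finrank ℤ M = finrank ℝ E) :
    DiscreteTopology M := by
  have : IsAddTorsionFree E := .of_isTorsionFree ℝ E
  have : Module.Free ℤ M := Module.free_of_finite_type_torsion_free'
  let c := Module.Free.chooseBasis ℤ M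
  have hc : span ℤ (range ((↑) ∘ c : _ → E)) = M := by
    rw [range_comp, ← M.coe_subtype, ← map_span, c.span_eq, map_top, range_subtype]
  have htop : ⊤ ≤ span ℝ (range ((↑) ∘ c : _ → E)) := by
    rw [← span_span_of_tower ℤ, hc, hspan]
  have hcard : Fintype.card (Module.Free.ChooseBasisIndex ℤ M) = finrank ℝ E := by
    rw [← finrank_eq_card_chooseBasisIndex, hrank]
  rw [← hc, ← coe_basisOfTopLeSpanOfCardEqFinrank _ htop hcard]
  infer_instance

section LatticeQuotient

variable {V : Type*} [NormedAddCommGroup V] [NormedSpace ℝ V] [FiniteDimensional ℝ V]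
  (Λ : Submodule ℤ V) [DiscreteTopology Λ] {U : Submodule ℝ V}

theorem finrank_inf_restrictScalars_of_span_inter_eq (hU : span ℝ ((U : Set V) ∩ Λ) = U) :
    finrank ℤ ↥(Λ ⊓ U.restrictScalars ℤ) = finrank ℝ U := by
  set N := Λ ⊓ U.restrictScalars ℤ
  have : DiscreteTopology (span ℤ (N : Set V)) := by
    rw [span_eq]
    exact DiscreteTopology.of_subset ‹DiscreteTopology Λ› inf_le_left
  calc finrank ℤ N = Set.finrank ℤ (N : Set V) := by rw [Set.finrank, span_eq]
    _ = Set.finrank ℝ (N : Set V) := (Real.finrank_eq_int_finrank_of_discrete this).symm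
    _ = finrank ℝ U := by rw [Set.finrank, coe_inf, inter_comm, coe_restrictScalars, hU]

variable [IsZLattice ℝ Λ]

theorem finrank_map_mkQ_of_span_inter_eq (hU : span ℝ ((U : Set V) ∩ Λ) = U) :
    finrank ℤ (Λ.map (U.mkQ.restrictScalars ℤ)) = finrank ℝ (V ⧸ U) := by
  set f := (U.mkQ.restrictScalars ℤ).domRestrict Λ
  have hker : finrank ℤ (LinearMap.ker f) = finrank ℝ U := by
    rw [LinearMap.ker_domRestrict, ← finrank_map_subtype_eq, map_comap_subtype,
      LinearMap.ker_restrictScalars, ker_mkQ,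
      finrank_inf_restrictScalars_of_span_inter_eq Λ hU]
  have := (LinearMap.ker f).finrank_quotient_add_finrank
  rw [f.quotKerEquivRange.finrank_eq, LinearMap.range_domRestrict, hker, ZLattice.rank ℝ Λ,
    ← U.finrank_quotient_add_finrank] at this
  omega

theorem discreteTopology_map_mkQ_of_span_inter_eq (hU : span ℝ ((U : Set V) ∩ Λ) = U) :
    DiscreteTopology (Λ.map (U.mkQ.restrictScalars ℤ)) := by
  have : IsClosed (U : Set V) := U.closed_of_finiteDimensional
  have : Module.Finite ℤ Λ := ZLattice.module_finite ℝ Λ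
  refine discreteTopology_of_span_eq_top_of_finrank_eq _ ?_
    (finrank_map_mkQ_of_span_inter_eq Λ hU)
  rw [map_coe, LinearMap.coe_restrictScalars, ← map_span U.mkQ, IsZLattice.span_top,
    Submodule.map_top, range_mkQ]

theorem connectedComponentIn_closure_image_mkQ_subset (hU : span ℝ ((U : Set V) ∩ Λ) = U) :
    connectedComponentIn (closure (U.mkQ '' Λ)) 0 ⊆ {0} := by
  have := discreteTopology_map_mkQ_of_span_inter_eq Λ hU
  have : IsClosed (U : Set V) := U.closed_of_finiteDimensional
  have hclosed : IsClosed (U.mkQ '' Λ) :=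
    AddSubgroup.isClosed_of_discrete (H := (Λ.map (U.mkQ.restrictScalars ℤ)).toAddSubgroup)
  rw [hclosed.closure_eq]
  exact connectedComponentIn_subset_singleton (s := (Λ.map (U.mkQ.restrictScalars ℤ) : Set (V ⧸ U))) 0

end LatticeQuotient

/-- Every L-generated subspace of V containing W contains Ŵ = P⁻¹(K), where K is the
identity component of the closure of P(L) in V/W; hence Ŵ is the L-closure of W. -/
theorem stmt_13 {V : Type*} [NormedAddCommGroup V] [NormedSpace ℝ V]
    [FiniteDimensional ℝ V] (L : AddSubgroup V)
    (hL : ∃ b : Module.Basis (Fin (Module.finrank ℝ V)) ℝ V,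
      AddSubgroup.closure (Set.range ⇑b) = L)
    (W : Submodule ℝ V) :
    ∀ U : Submodule ℝ V,
      Submodule.span ℝ ((U : Set V) ∩ (L : Set V)) = U → W ≤ U →
      ⇑W.mkQ ⁻¹' (connectedComponentIn (closure (⇑W.mkQ '' (L : Set V))) 0)
        ⊆ (U : Set V) := by
  intro U hU hWU
  obtain ⟨b, rfl⟩ := hL
  rw [← span_int_eq_addSubgroupClosure, coe_toAddSubgroup] at hU ⊢
  refine (preimage_mkQ_connectedComponentIn_closure_mono hWU _).trans fun x hx => ?_
  simpa using connectedComponentIn_closure_image_mkQ_subset _ hU hx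
end

section
/- In the setting of the L-closure construction, P(Ŵ) = K, the intersection K ∩ P(L) equals P(L ∩ Ŵ), and P(L ∩ Ŵ) is dense in K. -/
/-!
A closed subgroup `G` of a finite-dimensional real vector space contains every real multiple
of its sufficiently small elements: otherwise, on a complement of the largest subspace inside
`G`, there would be nonzero elements of `G` tending to `0`, and the integer multiples of such
elements fill out, in the limit, the whole line through a limiting direction, which would then
lie in `G`. Hence the identity component of `G` is a neighbourhood of `0` in `G`, so any dense
subgroup of `G` meets it densely. Applied in `V ⧸ W` to `G = closure (P L)` this gives the
density; the two set identities are formal since `P` is surjective.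
-/

open Filter Topology Set

namespace AddSubgroup

section Lineality

variable {E : Type*} [AddCommGroup E] [Module ℝ E]

/-- The largest real subspace contained in `G`. -/
def lineality (G : AddSubgroup E) : Submodule ℝ E where
  carrier := {x | ∀ t : ℝ, t • x ∈ G}
  add_mem' hx hy t := by simpa [smul_add] using G.add_mem (hx t) (hy t)
  zero_mem' t := by simp
  smul_mem' c x hx t := by simpa [smul_smul] using hx (t * c)

theorem mem_of_mem_lineality {G : AddSubgroup E} {x : E} (hx : x ∈ G.lineality) : x ∈ G := by
  simpa using hx 1

end Lineality

theorem add_mem_connectedComponentIn_zero {E : Type*} [TopologicalSpace E] [AddGroup E]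
    [ContinuousAdd E] (G : AddSubgroup E) {x y : E} (hx : x ∈ connectedComponentIn (G : Set E) 0)
    (hy : y ∈ connectedComponentIn (G : Set E) 0) :
    x + y ∈ connectedComponentIn (G : Set E) 0 := by
  have hxG : x ∈ G := connectedComponentIn_subset _ _ hx
  have htranslate :
      (x + ·) '' connectedComponentIn (G : Set E) 0 ⊆ connectedComponentIn G x := by
    refine (isPreconnected_connectedComponentIn.image _
      (continuous_const_add x).continuousOn).subset_connectedComponentIn
      ⟨0, mem_connectedComponentIn G.zero_mem, add_zero x⟩ ?_
    rintro _ ⟨z, hz, rfl⟩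
    exact G.add_mem hxG (connectedComponentIn_subset _ _ hz)
  rw [connectedComponentIn_eq hx]
  exact htranslate ⟨y, hy, rfl⟩

section Normed

variable {E : Type*} [NormedAddCommGroup E] [NormedSpace ℝ E]

theorem mem_lineality_of_tendsto {G : AddSubgroup E} (hG : IsClosed (G : Set E)) {ι : Type*}
    {l : Filter ι} [l.NeBot] {x : ι → E} (hxG : ∀ i, x i ∈ G) (hx0 : ∀ i, x i ≠ 0)
    (hx : Tendsto x l (𝓝 0)) {y : E}
    (hy : Tendsto (fun i => ‖x i‖⁻¹ • x i) l (𝓝 y)) :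
    y ∈ G.lineality := by
  intro t
  have hpos : ∀ i, 0 < ‖x i‖ := fun i => norm_pos_iff.2 (hx0 i)
  have hnorm : Tendsto (fun i => ‖x i‖) l (𝓝 0) := by simpa using hx.norm
  -- `⌊t / ‖x i‖⌋ • x i ∈ G` approximates `t • y` to within about `‖x i‖`
  have hcoeff : Tendsto (fun i => (⌊t / ‖x i‖⌋ : ℝ) * ‖x i‖) l (𝓝 t) := by
    refine tendsto_of_tendsto_of_tendsto_of_le_of_le (g := fun i => t - ‖x i‖)
      (by simpa using tendsto_const_nhds.sub hnorm) tendsto_const_nhds (fun i => ?_) (fun i => ?_)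
    · linarith [Int.sub_floor_div_mul_lt t (hpos i)]
    · linarith [Int.sub_floor_div_mul_nonneg t (hpos i)]
  refine hG.mem_of_tendsto (hcoeff.smul hy) (Eventually.of_forall fun i => ?_)
  rw [smul_smul, mul_assoc, mul_inv_cancel₀ (hpos i).ne', mul_one, Int.cast_smul_eq_zsmul]
  exact G.zsmul_mem (hxG i) _

theorem lineality_subset_connectedComponentIn (G : AddSubgroup E) :
    (G.lineality : Set E) ⊆ connectedComponentIn (G : Set E) 0 :=
  G.lineality.convex.isPreconnected.subset_connectedComponentIn G.lineality.zero_mem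
    fun _ => mem_of_mem_lineality

variable [FiniteDimensional ℝ E]

theorem eventually_eq_zero_of_disjoint_lineality {G : AddSubgroup E} (hG : IsClosed (G : Set E))
    {U : Submodule ℝ E} (hU : Disjoint G.lineality U) :
    ∀ᶠ x in 𝓝 (0 : E), x ∈ G → x ∈ U → x = 0 := by
  by_contra h
  obtain ⟨x, hx, hxGU⟩ := exists_seq_forall_of_frequently (not_eventually.1 h)
  push Not at hxGU
  have hdir : ∀ n, ‖x n‖⁻¹ • x n ∈ Metric.sphere (0 : E) 1 ∩ U := fun n =>
    ⟨by simp [norm_smul, (hxGU n).2.2], U.smul_mem _ (hxGU n).2.1⟩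
  obtain ⟨y, ⟨hy1, hyU⟩, φ, hφ, hy⟩ :=
    ((isCompact_sphere 0 1).inter_right U.closed_of_finiteDimensional).tendsto_subseq hdir
  have hyG : y ∈ G.lineality := mem_lineality_of_tendsto hG (fun n => (hxGU (φ n)).1)
    (fun n => (hxGU (φ n)).2.2) (hx.comp hφ.tendsto_atTop) hy
  rw [Submodule.disjoint_def.1 hU y hyG hyU] at hy1
  simp at hy1

theorem eventually_mem_lineality {G : AddSubgroup E} (hG : IsClosed (G : Set E)) :
    ∀ᶠ x in 𝓝 (0 : E), x ∈ G → x ∈ G.lineality := by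
  obtain ⟨U, hU⟩ := G.lineality.exists_isCompl
  set π := U.projection G.lineality hU.symm
  have hπ : Tendsto π (𝓝 0) (𝓝 0) := by
    simpa using (LinearMap.continuous_of_finiteDimensional π).tendsto 0
  filter_upwards [hπ.eventually (eventually_eq_zero_of_disjoint_lineality hG hU.disjoint)]
    with x hx hxG
  have hsub : x - π x ∈ G.lineality := by
    rw [← Submodule.projection_eq_self_sub_projection]
    exact Submodule.projection_apply_mem _ _
  have hπG : π x ∈ G := by
    simpa using G.sub_mem hxG (mem_of_mem_lineality hsub)
  rwa [hx hπG (Submodule.projection_apply_mem _ x), sub_zero] at hsub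

theorem connectedComponentIn_closure_subset_closure_inter (H : AddSubgroup E) :
    connectedComponentIn (_root_.closure (H : Set E)) 0 ⊆
      _root_.closure (H ∩ connectedComponentIn (_root_.closure (H : Set E)) 0) := by
  set G := H.topologicalClosure
  rw [← H.topologicalClosure_coe]
  intro k hk
  have hkG : k ∈ G := connectedComponentIn_subset _ _ hk
  have hsmall : ∀ᶠ d in 𝓝 k, d - k ∈ G → d - k ∈ G.lineality :=
    (tendsto_sub_nhds_zero_iff.2 tendsto_id).eventually
      (eventually_mem_lineality H.isClosed_topologicalClosure)
  have hkH : ∃ᶠ d in 𝓝 k, d ∈ H := mem_closure_iff_frequently.1 hkG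
  refine mem_closure_iff_frequently.2 ((hkH.and_eventually hsmall).mono ?_)
  rintro d ⟨hdH, hd⟩
  refine ⟨hdH, ?_⟩
  have hdk := hd (G.sub_mem (H.le_topologicalClosure hdH) hkG)
  simpa only [add_sub_cancel] using
    G.add_mem_connectedComponentIn_zero hk (G.lineality_subset_connectedComponentIn hdk)

end Normed

end AddSubgroup

theorem stmt_14_general {V : Type*} [NormedAddCommGroup V] [NormedSpace ℝ V]
    [FiniteDimensional ℝ V] (L : AddSubgroup V)
    (W : Submodule ℝ V)
    (K : Set (V ⧸ W))
    (hK : K = connectedComponentIn (closure (⇑W.mkQ '' (L : Set V))) 0) :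
    ⇑W.mkQ '' (⇑W.mkQ ⁻¹' K) = K ∧
    K ∩ (⇑W.mkQ '' (L : Set V)) = ⇑W.mkQ '' ((L : Set V) ∩ ⇑W.mkQ ⁻¹' K) ∧
    K ⊆ closure (⇑W.mkQ '' ((L : Set V) ∩ ⇑W.mkQ ⁻¹' K)) := by
  -- puts the quotient norm on `V ⧸ W`
  have : IsClosed (W : Set V) := W.closed_of_finiteDimensional
  subst hK
  refine ⟨image_preimage_eq _ W.mkQ_surjective, by rw [image_inter_preimage, inter_comm], ?_⟩
  rw [image_inter_preimage]
  have hPL : ((L.map W.mkQ.toAddMonoidHom : AddSubgroup (V ⧸ W)) : Set (V ⧸ W)) =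
      W.mkQ '' L := AddSubgroup.coe_map _ _
  simpa only [hPL] using
    (L.map W.mkQ.toAddMonoidHom).connectedComponentIn_closure_subset_closure_inter

/-- In the L-closure construction: P(Ŵ) = K, K ∩ P(L) = P(L ∩ Ŵ), and P(L ∩ Ŵ) is
dense in K, where K is the identity component of the closure of P(L) in V/W and
Ŵ = P⁻¹(K). -/
theorem stmt_14 {V : Type*} [NormedAddCommGroup V] [NormedSpace ℝ V]
    [FiniteDimensional ℝ V] (L : AddSubgroup V)
    (hL : ∃ b : Module.Basis (Fin (Module.finrank ℝ V)) ℝ V,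
      AddSubgroup.closure (Set.range ⇑b) = L)
    (W : Submodule ℝ V)
    (K : Set (V ⧸ W))
    (hK : K = connectedComponentIn (closure (⇑W.mkQ '' (L : Set V))) 0) :
    ⇑W.mkQ '' (⇑W.mkQ ⁻¹' K) = K ∧
    K ∩ (⇑W.mkQ '' (L : Set V)) = ⇑W.mkQ '' ((L : Set V) ∩ ⇑W.mkQ ⁻¹' K) ∧
    K ⊆ closure (⇑W.mkQ '' ((L : Set V) ∩ ⇑W.mkQ ⁻¹' K)) :=
  stmt_14_general L W K hK
end
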